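/- arXiv:1801.06862 — 3 statements merged into one kernel-verified Lean document; each statement's English description precedes it below -/
import Mathlib

section
/- Missing information principle, third order (Lemma 7 of the paper, order 3, finite mixture form): if p is three times differentiable in θ, then for every θ ∈ U, (d³/dθ³) log P(θ) = E_θ[ℓ₃(θ,·)] + 3 E_θ^c[ℓ₂(θ,·) ℓ₁(θ,·)] + E_θ^c[ℓ₁(θ,·)³]. -/
/-!
With `rₙ = f⁽ⁿ⁾ / f`, the derivatives of `log f` are `r₁`, `r₂ - r₁²` and `r₃ - 3 r₂ r₁ + 2 r₁³`
(differentiate `rₙ' = rₙ₊₁ - rₙ r₁`); inverted, `r₂ = ℓ₂ + ℓ₁²` and `r₃ = ℓ₃ + 3 ℓ₂ ℓ₁ + ℓ₁³`.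
Differentiation commutes with the finite sum `P = Σₓ p(·, x)`, so `P⁽ⁿ⁾ / P = E_θ[p⁽ⁿ⁾ / p]`.
Applying the first formula to `P` and the inverse ones to each `p(·, x)` writes `(log P)⁽³⁾`
through posterior moments of the `ℓⱼ`; expanding the central moments gives the claim.
-/

noncomputable section

/-- `P(θ) = Σ_x p(θ,x)`. -/
def mixP {𝒳 : Type*} [Fintype 𝒳] (p : ℝ → 𝒳 → ℝ) (θ : ℝ) : ℝ := ∑ x, p θ x

/-- Posterior weights `w(θ,x) = p(θ,x)/P(θ)`. -/
def mixW {𝒳 : Type*} [Fintype 𝒳] (p : ℝ → 𝒳 → ℝ) (θ : ℝ) (x : 𝒳) : ℝ :=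
  p θ x / mixP p θ

/-- Conditional expectation `E_θ[g] = Σ_x w(θ,x) g(x)`. -/
def mixE {𝒳 : Type*} [Fintype 𝒳] (p : ℝ → 𝒳 → ℝ) (θ : ℝ) (g : 𝒳 → ℝ) : ℝ :=
  ∑ x, mixW p θ x * g x

/-- Central conditional moments `E_θ^c[g₁⋯g_r] = Σ_x w(θ,x) ∏ᵢ (gᵢ(x) − E_θ[gᵢ])`. -/
def mixEc {𝒳 : Type*} [Fintype 𝒳] (p : ℝ → 𝒳 → ℝ) (θ : ℝ) (gs : List (𝒳 → ℝ)) : ℝ :=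
  ∑ x, mixW p θ x * (gs.map fun g => g x - mixE p θ g).prod

/-- `ℓ_j(θ,x) = (∂/∂θ)^j log p(θ,x)`. -/
def mixL {𝒳 : Type*} [Fintype 𝒳] (p : ℝ → 𝒳 → ℝ) (j : ℕ) (θ : ℝ) (x : 𝒳) : ℝ :=
  iteratedDeriv j (fun θ' => Real.log (p θ' x)) θ

end

open Real Set

noncomputable def derivRatio (f : ℝ → ℝ) (n : ℕ) (t : ℝ) : ℝ := iteratedDeriv n f t / f t

section LogDerivatives

variable {f : ℝ → ℝ} {U : Set ℝ}

lemma hasDerivAt_derivRatio {t : ℝ} (n : ℕ) (hf : f t ≠ 0) (h0 : DifferentiableAt ℝ f t)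
    (hn : DifferentiableAt ℝ (iteratedDeriv n f) t) :
    HasDerivAt (derivRatio f n)
      (derivRatio f (n + 1) t - derivRatio f n t * derivRatio f 1 t) t := by
  refine (hn.hasDerivAt.div h0.hasDerivAt hf).congr_deriv ?_
  simp only [derivRatio, iteratedDeriv_succ, iteratedDeriv_zero]
  field_simp

lemma eqOn_iteratedDeriv_one_log (hU : IsOpen U) (hf : ∀ t ∈ U, f t ≠ 0)
    (hd : ∀ j < 1, DifferentiableOn ℝ (iteratedDeriv j f) U) :
    EqOn (iteratedDeriv 1 fun s => log (f s)) (derivRatio f 1) U := by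
  intro t ht
  have h0 : DifferentiableAt ℝ f t := by
    simpa using (hd 0 one_pos).differentiableAt (hU.mem_nhds ht)
  rw [iteratedDeriv_one, deriv.log h0 (hf t ht), derivRatio, iteratedDeriv_one]

lemma eqOn_iteratedDeriv_two_log (hU : IsOpen U) (hf : ∀ t ∈ U, f t ≠ 0)
    (hd : ∀ j < 2, DifferentiableOn ℝ (iteratedDeriv j f) U) :
    EqOn (iteratedDeriv 2 fun s => log (f s))
      (fun t => derivRatio f 2 t - derivRatio f 1 t ^ 2) U := by
  intro t ht
  have hdt : ∀ j < 2, DifferentiableAt ℝ (iteratedDeriv j f) t :=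
    fun j hj => (hd j hj).differentiableAt (hU.mem_nhds ht)
  have h0 : DifferentiableAt ℝ f t := by simpa using hdt 0 two_pos
  rw [iteratedDeriv_succ, ((eqOn_iteratedDeriv_one_log hU hf
    fun j hj => hd j (by omega)).eventuallyEq_of_mem (hU.mem_nhds ht)).deriv_eq]
  exact ((hasDerivAt_derivRatio 1 (hf t ht) h0 (hdt 1 one_lt_two)).congr_deriv
    (by ring)).deriv

lemma eqOn_iteratedDeriv_three_log (hU : IsOpen U) (hf : ∀ t ∈ U, f t ≠ 0)
    (hd : ∀ j < 3, DifferentiableOn ℝ (iteratedDeriv j f) U) :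
    EqOn (iteratedDeriv 3 fun s => log (f s))
      (fun t => derivRatio f 3 t - 3 * derivRatio f 2 t * derivRatio f 1 t
        + 2 * derivRatio f 1 t ^ 3) U := by
  intro t ht
  have hdt : ∀ j < 3, DifferentiableAt ℝ (iteratedDeriv j f) t :=
    fun j hj => (hd j hj).differentiableAt (hU.mem_nhds ht)
  have h0 : DifferentiableAt ℝ f t := by simpa using hdt 0 (by norm_num)
  rw [iteratedDeriv_succ, ((eqOn_iteratedDeriv_two_log hU hf
    fun j hj => hd j (by omega)).eventuallyEq_of_mem (hU.mem_nhds ht)).deriv_eq]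
  exact (((hasDerivAt_derivRatio 2 (hf t ht) h0 (hdt 2 (by norm_num))).sub
    ((hasDerivAt_derivRatio 1 (hf t ht) h0 (hdt 1 (by norm_num))).pow 2)).congr_deriv
    (by ring)).deriv

lemma derivRatio_two_eq_log (hU : IsOpen U) (hf : ∀ t ∈ U, f t ≠ 0)
    (hd : ∀ j < 2, DifferentiableOn ℝ (iteratedDeriv j f) U) {t : ℝ} (ht : t ∈ U) :
    derivRatio f 2 t = iteratedDeriv 2 (fun s => log (f s)) t
      + iteratedDeriv 1 (fun s => log (f s)) t ^ 2 := by
  rw [eqOn_iteratedDeriv_two_log hU hf hd ht,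
    eqOn_iteratedDeriv_one_log hU hf (fun j hj => hd j (by omega)) ht]
  ring

lemma derivRatio_three_eq_log (hU : IsOpen U) (hf : ∀ t ∈ U, f t ≠ 0)
    (hd : ∀ j < 3, DifferentiableOn ℝ (iteratedDeriv j f) U) {t : ℝ} (ht : t ∈ U) :
    derivRatio f 3 t = iteratedDeriv 3 (fun s => log (f s)) t
      + 3 * (iteratedDeriv 2 (fun s => log (f s)) t * iteratedDeriv 1 (fun s => log (f s)) t)
      + iteratedDeriv 1 (fun s => log (f s)) t ^ 3 := by
  rw [eqOn_iteratedDeriv_three_log hU hf hd ht,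
    eqOn_iteratedDeriv_two_log hU hf (fun j hj => hd j (by omega)) ht,
    eqOn_iteratedDeriv_one_log hU hf (fun j hj => hd j (by omega)) ht]
  ring

end LogDerivatives

section FiniteSums

variable {ι : Type*} {s : Finset ι} {g : ι → ℝ → ℝ} {U : Set ℝ} {n : ℕ}

lemma eqOn_iteratedDeriv_sum (hU : IsOpen U)
    (hd : ∀ i ∈ s, ∀ j < n, DifferentiableOn ℝ (iteratedDeriv j (g i)) U) :
    ∀ j ≤ n, EqOn (iteratedDeriv j fun t => ∑ i ∈ s, g i t)
      (fun t => ∑ i ∈ s, iteratedDeriv j (g i) t) U := by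
  intro j hj
  induction j with
  | zero => simp [EqOn]
  | succ j ih =>
    intro t ht
    rw [iteratedDeriv_succ, ((ih (by omega)).eventuallyEq_of_mem (hU.mem_nhds ht)).deriv_eq,
      deriv_fun_sum fun i hi => (hd i hi j (by omega)).differentiableAt (hU.mem_nhds ht)]
    simp only [iteratedDeriv_succ]

lemma differentiableOn_iteratedDeriv_sum (hU : IsOpen U)
    (hd : ∀ i ∈ s, ∀ j < n, DifferentiableOn ℝ (iteratedDeriv j (g i)) U) :
    ∀ j < n, DifferentiableOn ℝ (iteratedDeriv j fun t => ∑ i ∈ s, g i t) U := fun j hj =>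
  (DifferentiableOn.fun_sum fun i hi => hd i hi j hj).congr
    (eqOn_iteratedDeriv_sum hU hd j hj.le)

end FiniteSums

section Mixture

variable {𝒳 : Type*} [Fintype 𝒳] {p : ℝ → 𝒳 → ℝ} {θ : ℝ}

lemma sum_mixW (hP : mixP p θ ≠ 0) : ∑ x, mixW p θ x = 1 := by
  simp only [mixW, ← Finset.sum_div]
  exact div_self hP

lemma mixE_add (g h : 𝒳 → ℝ) : mixE p θ (g + h) = mixE p θ g + mixE p θ h := by
  simp only [mixE, Pi.add_apply, mul_add, Finset.sum_add_distrib]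

lemma mixE_smul (c : ℝ) (g : 𝒳 → ℝ) : mixE p θ (c • g) = c * mixE p θ g := by
  simp only [mixE, Pi.smul_apply, smul_eq_mul, Finset.mul_sum]
  exact Finset.sum_congr rfl fun x _ => by ring

lemma mixE_div (hp : ∀ x, p θ x ≠ 0) (d : 𝒳 → ℝ) :
    mixE p θ (fun x => d x / p θ x) = (∑ x, d x) / mixP p θ := by
  simp only [mixE, mixW, Finset.sum_div]
  exact Finset.sum_congr rfl fun x _ => by field_simp [hp x]

lemma mixEc_pair (hP : mixP p θ ≠ 0) (g h : 𝒳 → ℝ) :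
    mixEc p θ [g, h] = mixE p θ (g * h) - mixE p θ g * mixE p θ h := by
  have expand : ∀ a b : ℝ, ∑ x, mixW p θ x * ((g x - a) * (h x - b))
      = mixE p θ (g * h) - a * mixE p θ h - b * mixE p θ g + a * b * ∑ x, mixW p θ x := by
    intro a b
    simp only [mixE, Pi.mul_apply, Finset.mul_sum, ← Finset.sum_sub_distrib,
      ← Finset.sum_add_distrib]
    exact Finset.sum_congr rfl fun x _ => by ring
  simp only [mixEc, List.map_cons, List.map_nil, List.prod_cons, List.prod_nil, mul_one]
  rw [expand, sum_mixW hP]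
  ring

lemma mixEc_cube (hP : mixP p θ ≠ 0) (g : 𝒳 → ℝ) :
    mixEc p θ [g, g, g] = mixE p θ (g ^ 3) - 3 * mixE p θ (g ^ 2) * mixE p θ g
      + 2 * mixE p θ g ^ 3 := by
  have expand : ∀ a : ℝ, ∑ x, mixW p θ x * ((g x - a) * ((g x - a) * (g x - a)))
      = mixE p θ (g ^ 3) - 3 * a * mixE p θ (g ^ 2) + 3 * a ^ 2 * mixE p θ g
        - a ^ 3 * ∑ x, mixW p θ x := by
    intro a
    simp only [mixE, Pi.pow_apply, Finset.mul_sum, ← Finset.sum_sub_distrib,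
      ← Finset.sum_add_distrib]
    exact Finset.sum_congr rfl fun x _ => by ring
  simp only [mixEc, List.map_cons, List.map_nil, List.prod_cons, List.prod_nil, mul_one]
  rw [expand, sum_mixW hP]
  ring

lemma mixP_pos [Nonempty 𝒳] (h : ∀ x, 0 < p θ x) : 0 < mixP p θ :=
  Finset.sum_pos (fun x _ => h x) Finset.univ_nonempty

lemma derivRatio_mixP {U : Set ℝ} {n : ℕ} (hU : IsOpen U)
    (hd : ∀ x, ∀ j < n, DifferentiableOn ℝ (iteratedDeriv j fun t => p t x) U)
    (hp : ∀ x, p θ x ≠ 0) (hθ : θ ∈ U) :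
    ∀ j ≤ n, derivRatio (mixP p) j θ = mixE p θ fun x => derivRatio (fun t => p t x) j θ := by
  intro j hj
  simp only [derivRatio]
  rw [mixE_div hp]
  exact congrArg (· / mixP p θ) (eqOn_iteratedDeriv_sum hU (fun x _ => hd x) j hj hθ)

end Mixture

/-- Missing information principle, third order (finite mixture form): if `p` is three times
differentiable in `θ`, then for every `θ ∈ U`,
`(d³/dθ³) log P(θ) = E_θ[ℓ₃] + 3 E_θ^c[ℓ₂ℓ₁] + E_θ^c[ℓ₁³]`. -/
theorem stmt3 {𝒳 : Type*} [Fintype 𝒳] [Nonempty 𝒳]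
    (U : Set ℝ) (hU : IsOpen U) (p : ℝ → 𝒳 → ℝ)
    (hpos : ∀ θ ∈ U, ∀ x, 0 < p θ x)
    (hdiff : ∀ x, ∀ j < 3, DifferentiableOn ℝ (iteratedDeriv j (fun θ => p θ x)) U) :
    ∀ θ ∈ U,
      iteratedDeriv 3 (fun θ' => Real.log (mixP p θ')) θ
        = mixE p θ (mixL p 3 θ)
          + 3 * mixEc p θ [mixL p 2 θ, mixL p 1 θ]
          + mixEc p θ [mixL p 1 θ, mixL p 1 θ, mixL p 1 θ] := by
  intro θ hθ
  have hp : ∀ x, ∀ t ∈ U, p t x ≠ 0 := fun x t ht => (hpos t ht x).ne'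
  have hP : ∀ t ∈ U, mixP p t ≠ 0 := fun t ht => (mixP_pos (hpos t ht)).ne'
  have hPd : ∀ j < 3, DifferentiableOn ℝ (iteratedDeriv j (mixP p)) U :=
    differentiableOn_iteratedDeriv_sum hU fun x _ => hdiff x
  have hE := derivRatio_mixP hU hdiff (fun x => hp x θ hθ) hθ
  have hℓ1 : (fun x => derivRatio (fun t => p t x) 1 θ) = mixL p 1 θ := funext fun x =>
    (eqOn_iteratedDeriv_one_log hU (hp x) (fun j hj => hdiff x j (by omega)) hθ).symm
  have hℓ2 : (fun x => derivRatio (fun t => p t x) 2 θ) = mixL p 2 θ + mixL p 1 θ ^ 2 :=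
    funext fun x => derivRatio_two_eq_log hU (hp x) (fun j hj => hdiff x j (by omega)) hθ
  have hℓ3 : (fun x => derivRatio (fun t => p t x) 3 θ)
      = mixL p 3 θ + (3 : ℝ) • (mixL p 2 θ * mixL p 1 θ) + mixL p 1 θ ^ 3 :=
    funext fun x => derivRatio_three_eq_log hU (hp x) (hdiff x) hθ
  rw [eqOn_iteratedDeriv_three_log hU hP hPd hθ]
  dsimp only
  rw [hE 1 (by norm_num), hE 2 (by norm_num),
    hE 3 le_rfl, hℓ1, hℓ2, hℓ3, mixE_add, mixE_add, mixE_add, mixE_smul,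
    mixEc_pair (hP θ hθ), mixEc_cube (hP θ hθ)]
  ring
end

section
/- Two-sided geometric tail sum bound (Lemma two_rho_sum of the paper): for all ρ ∈ (0,1), positive integers c ≥ 1 and q ≥ 1, and integers a < b: (i) Σ_{t ∈ ℤ} min(ρ^{⌊(t−a)/(cq)⌋}, ρ^{⌊(b−t)/q⌋}) ≤ q(c+1) ρ^{⌊(b−a)/((c+1)q)⌋} / (1−ρ); and (ii) Σ_{t ∈ ℤ} min(ρ^{⌊(t−a)/q⌋}, ρ^{⌊(b−t)/(cq)⌋}) ≤ q(c+1) ρ^{⌊(b−a)/((c+1)q)⌋} / (1−ρ). -/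
/-!
Put `d₁ = cq`, `d₂ = q` (or the reverse) and `K = ⌊(b - a)/((c + 1)q)⌋`, so that
`(d₁ + d₂) K ≤ b - a`. Shifting the summation index to `t₀ = a + d₁ K`, the first term of the
minimum is at most `ρ ^ K ρ ^ ⌊n/d₁⌋` at `t₀ + n`, and the second one is at most
`ρ ^ K ρ ^ ⌊n/d₂⌋` at `t₀ - 1 - n`. Each value of `⌊n/d⌋` is taken `d` times, so
`∑ₙ ρ ^ ⌊n/d⌋ = d/(1 - ρ)`, and the two half-line sums add up to `(d₁ + d₂) ρ ^ K/(1 - ρ)`.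
-/

theorem Int.floor_intCast_div_natCast {α : Type*} [Field α] [LinearOrder α]
    [IsStrictOrderedRing α] [FloorRing α] (m : ℤ) (d : ℕ) :
    ⌊(m : α) / d⌋ = m / (d : ℤ) := by
  rw [← Rat.floor_intCast_div_natCast, ← Rat.floor_cast (α := α)]
  push_cast
  rfl

theorem hasSum_pow_div_of_lt_one {ρ : ℝ} (h₀ : 0 ≤ ρ) (h₁ : ρ < 1) {d : ℕ} [NeZero d] :
    HasSum (fun n : ℕ => ρ ^ (n / d)) (d / (1 - ρ)) := by
  have hgeom := hasSum_geometric_of_lt_one h₀ h₁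
  have hprod : HasSum (fun p : ℕ × Fin d => ρ ^ p.1 * 1) ((1 - ρ)⁻¹ * d) :=
    hgeom.mul (by simpa using hasSum_fintype fun _ : Fin d => (1 : ℝ))
      (hgeom.summable.mul_of_nonneg Summable.of_finite (fun n => by positivity)
        fun _ => zero_le_one)
  rw [div_eq_inv_mul, ← (Nat.divModEquiv d).symm.hasSum_iff]
  convert hprod with p
  rw [Function.comp_apply, Nat.divModEquiv_symm_apply, mul_one, add_comm,
    Nat.add_mul_div_right _ _ (NeZero.pos d), Nat.div_eq_of_lt p.2.is_lt, zero_add]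

theorem summable_and_tsum_le_of_nat_of_neg_add_one {f : ℤ → ℝ} {u v : ℕ → ℝ} {A B : ℝ}
    (hf : ∀ t, 0 ≤ f t) (hu : HasSum u A) (hv : HasSum v B)
    (hfu : ∀ n : ℕ, f n ≤ u n) (hfv : ∀ n : ℕ, f (-(n + 1)) ≤ v n) :
    Summable f ∧ ∑' t, f t ≤ A + B := by
  have hle : ∀ t, f t ≤ Int.rec u v t := by
    rintro (n | n)
    · exact hfu n
    · exact hfv n
  have huv := hu.int_rec hv
  have hs := huv.summable.of_nonneg_of_le hf hle
  exact ⟨hs, huv.tsum_eq ▸ hs.tsum_le_tsum hle huv.summable⟩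

theorem zpow_ediv_le_zpow_mul_pow_div {ρ : ℝ} (h₀ : 0 < ρ) (h₁ : ρ ≤ 1) {d n : ℕ} [NeZero d]
    {K m : ℤ} (h : n + d * K ≤ m) : ρ ^ (m / d) ≤ ρ ^ K * ρ ^ (n / d) :=
  calc ρ ^ (m / d) ≤ ρ ^ ((n + d * K) / d) :=
        zpow_le_zpow_right_of_le_one₀ h₀ h₁
          (Int.ediv_le_ediv (by exact_mod_cast Nat.pos_of_neZero d) h)
    _ = ρ ^ K * ρ ^ (n / d) := by
        rw [Int.add_mul_ediv_left _ _ (by exact_mod_cast NeZero.ne d), zpow_add₀ h₀.ne',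
          ← Int.natCast_div, zpow_natCast, mul_comm]

theorem summable_and_tsum_min_zpow_ediv_le {ρ : ℝ} (h₀ : 0 < ρ) (h₁ : ρ < 1) {d₁ d₂ : ℕ}
    [NeZero d₁] [NeZero d₂] {a b K : ℤ} (hK : (d₁ + d₂ : ℤ) * K ≤ b - a) :
    Summable (fun t : ℤ => min (ρ ^ ((t - a) / d₁)) (ρ ^ ((b - t) / d₂))) ∧
      ∑' t : ℤ, min (ρ ^ ((t - a) / d₁)) (ρ ^ ((b - t) / d₂)) ≤ (d₁ + d₂) * ρ ^ K / (1 - ρ) := by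
  set f : ℤ → ℝ := fun t => min (ρ ^ ((t - a) / d₁)) (ρ ^ ((b - t) / d₂))
  set t₀ := a + d₁ * K
  rw [add_mul] at hK
  obtain ⟨hs, hle⟩ := summable_and_tsum_le_of_nat_of_neg_add_one (f := fun s => f (s + t₀))
    (fun _ => le_min (zpow_pos h₀ _).le (zpow_pos h₀ _).le)
    ((hasSum_pow_div_of_lt_one h₀.le h₁ (d := d₁)).mul_left (ρ ^ K))
    ((hasSum_pow_div_of_lt_one h₀.le h₁ (d := d₂)).mul_left (ρ ^ K))
    (fun n => (min_le_left _ _).trans (zpow_ediv_le_zpow_mul_pow_div h₀ h₁.le (by omega)))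
    (fun n => (min_le_right _ _).trans (zpow_ediv_le_zpow_mul_pow_div h₀ h₁.le (by omega)))
  refine ⟨(Equiv.addRight t₀).summable_iff.mp hs, ?_⟩
  rw [← (Equiv.addRight t₀).tsum_eq]
  exact hle.trans_eq (by ring)

theorem stmt10_general (ρ : ℝ) (hρ : ρ ∈ Set.Ioo (0 : ℝ) 1) (c q : ℕ) (hc : 1 ≤ c) (hq : 1 ≤ q)
    (a b : ℤ) :
    (Summable (fun t : ℤ =>
        min (ρ ^ ⌊((t - a : ℤ) : ℝ) / ((c * q : ℕ) : ℝ)⌋) (ρ ^ ⌊((b - t : ℤ) : ℝ) / (q : ℝ)⌋)) ∧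
      ∑' t : ℤ,
          min (ρ ^ ⌊((t - a : ℤ) : ℝ) / ((c * q : ℕ) : ℝ)⌋) (ρ ^ ⌊((b - t : ℤ) : ℝ) / (q : ℝ)⌋)
        ≤ (q : ℝ) * ((c : ℝ) + 1) * ρ ^ ⌊((b - a : ℤ) : ℝ) / (((c : ℝ) + 1) * (q : ℝ))⌋
            / (1 - ρ)) ∧
    (Summable (fun t : ℤ =>
        min (ρ ^ ⌊((t - a : ℤ) : ℝ) / (q : ℝ)⌋) (ρ ^ ⌊((b - t : ℤ) : ℝ) / ((c * q : ℕ) : ℝ)⌋)) ∧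
      ∑' t : ℤ,
          min (ρ ^ ⌊((t - a : ℤ) : ℝ) / (q : ℝ)⌋) (ρ ^ ⌊((b - t : ℤ) : ℝ) / ((c * q : ℕ) : ℝ)⌋)
        ≤ (q : ℝ) * ((c : ℝ) + 1) * ρ ^ ⌊((b - a : ℤ) : ℝ) / (((c : ℝ) + 1) * (q : ℝ))⌋
            / (1 - ρ)) := by
  obtain ⟨h₀, h₁⟩ := hρ
  have : NeZero c := ⟨by omega⟩
  have : NeZero q := ⟨by omega⟩
  have hD : ((c : ℝ) + 1) * q = ((c * q + q : ℕ) : ℝ) := by push_cast; ring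
  simp only [hD, Int.floor_intCast_div_natCast]
  have hK : ((c * q : ℕ) + q : ℤ) * ((b - a) / ((c * q + q : ℕ) : ℤ)) ≤ b - a := by
    exact_mod_cast Int.mul_ediv_self_le (by positivity)
  have hcoef : (q : ℝ) * (c + 1) = (c * q : ℕ) + q := by push_cast; ring
  rw [hcoef]
  refine ⟨summable_and_tsum_min_zpow_ediv_le h₀ h₁ hK, ?_⟩
  rw [add_comm ((c * q : ℕ) : ℝ)]
  exact summable_and_tsum_min_zpow_ediv_le h₀ h₁ (by rwa [add_comm])

/-- Two-sided geometric tail sum bound: for `ρ ∈ (0,1)`, positive integers `c, q`, and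
integers `a < b`, the sums `Σ_{t∈ℤ} min(ρ^{⌊(t−a)/(cq)⌋}, ρ^{⌊(b−t)/q⌋})` and
`Σ_{t∈ℤ} min(ρ^{⌊(t−a)/q⌋}, ρ^{⌊(b−t)/(cq)⌋})` converge and are bounded by
`q(c+1) ρ^{⌊(b−a)/((c+1)q)⌋}/(1−ρ)`. -/
theorem stmt10 (ρ : ℝ) (hρ : ρ ∈ Set.Ioo (0 : ℝ) 1) (c q : ℕ) (hc : 1 ≤ c) (hq : 1 ≤ q)
    (a b : ℤ) (hab : a < b) :
    (Summable (fun t : ℤ =>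
        min (ρ ^ ⌊((t - a : ℤ) : ℝ) / ((c * q : ℕ) : ℝ)⌋) (ρ ^ ⌊((b - t : ℤ) : ℝ) / (q : ℝ)⌋)) ∧
      ∑' t : ℤ,
          min (ρ ^ ⌊((t - a : ℤ) : ℝ) / ((c * q : ℕ) : ℝ)⌋) (ρ ^ ⌊((b - t : ℤ) : ℝ) / (q : ℝ)⌋)
        ≤ (q : ℝ) * ((c : ℝ) + 1) * ρ ^ ⌊((b - a : ℤ) : ℝ) / (((c : ℝ) + 1) * (q : ℝ))⌋
            / (1 - ρ)) ∧
    (Summable (fun t : ℤ =>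
        min (ρ ^ ⌊((t - a : ℤ) : ℝ) / (q : ℝ)⌋) (ρ ^ ⌊((b - t : ℤ) : ℝ) / ((c * q : ℕ) : ℝ)⌋)) ∧
      ∑' t : ℤ,
          min (ρ ^ ⌊((t - a : ℤ) : ℝ) / (q : ℝ)⌋) (ρ ^ ⌊((b - t : ℤ) : ℝ) / ((c * q : ℕ) : ℝ)⌋)
        ≤ (q : ℝ) * ((c : ℝ) + 1) * ρ ^ ⌊((b - a : ℤ) : ℝ) / (((c : ℝ) + 1) * (q : ℝ))⌋
            / (1 - ρ)) :=
  stmt10_general ρ hρ c q hc hq a b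
end

section
/- Weighted maximum bound via Hölder's inequality (Lemma 9 of the paper): let a : ℤ → ℝ with a_t > 0 for all t, and for a positive integer ℓ suppose A_ℓ := Σ_{t ∈ ℤ} (max(|t|,1))^{−2} a_t^ℓ < ∞. Then for all integers k ≥ 1 and m ≥ 0, max over tuples (t₁,…,t_ℓ) of integers with −m+1 ≤ t_i ≤ k for each i of the product a_{t₁} a_{t₂} ⋯ a_{t_ℓ} is at most (k+m)^{ℓ+1} · A_ℓ. -/
/-- Weighted maximum bound via Hölder's inequality (Lemma 9 of the paper): for a strictly
positive sequence `a : ℤ → ℝ` with `A_ℓ := Σ_{t∈ℤ} (|t| ∨ 1)^{−2} a_t^ℓ < ∞`, and integers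
`k ≥ 1`, `m ≥ 0`, every product `a_{t₁} ⋯ a_{t_ℓ}` over a tuple with `−m+1 ≤ t_i ≤ k` is at
most `(k+m)^{ℓ+1} A_ℓ`. -/
theorem stmt13 (a : ℤ → ℝ) (hpos : ∀ t, 0 < a t) (ℓ : ℕ) (hℓ : 1 ≤ ℓ)
    (hsum : Summable fun t : ℤ => a t ^ ℓ / (max |(t : ℝ)| 1) ^ 2)
    (k m : ℕ) (hk : 1 ≤ k) :
    ∀ t : Fin ℓ → ℤ, (∀ i, -(m : ℤ) + 1 ≤ t i ∧ t i ≤ (k : ℤ)) →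
      ∏ i, a (t i) ≤ ((k : ℝ) + (m : ℝ)) ^ (ℓ + 1)
        * ∑' t' : ℤ, a t' ^ ℓ / (max |(t' : ℝ)| 1) ^ 2 := by
  intro t ht
  set A := ∑' t' : ℤ, a t' ^ ℓ / (max |(t' : ℝ)| 1) ^ 2 with hAdef
  have hterm : ∀ s : ℤ, 0 < a s ^ ℓ / (max |(s : ℝ)| 1) ^ 2 := by
    intro s
    apply div_pos (pow_pos (hpos s) ℓ)
    positivity
  have hApos : 0 < A :=
    lt_of_lt_of_le (hterm 0) (Summable.le_tsum hsum 0 (fun s _ => (hterm s).le))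
  have hC : (1:ℝ) ≤ (k:ℝ) + m := by
    have h1 : (1:ℝ) ≤ (k:ℝ) := by exact_mod_cast hk
    have h2 : (0:ℝ) ≤ (m:ℝ) := Nat.cast_nonneg m
    linarith
  have hbound : ∀ i, a (t i) ^ ℓ ≤ ((k:ℝ)+m)^2 * A := by
    intro i
    have h1 : a (t i) ^ ℓ / (max |((t i : ℤ) : ℝ)| 1) ^ 2 ≤ A :=
      Summable.le_tsum hsum (t i) (fun s _ => (hterm s).le)
    have habs : |((t i : ℤ) : ℝ)| ≤ (k:ℝ)+m := by
      have h1' := (ht i).1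
      have h2' := (ht i).2
      rw [abs_le]
      constructor
      · have : -((k:ℤ)+m) ≤ t i := by omega
        calc -((k:ℝ)+m) = (((-((k:ℤ)+m)) : ℤ) : ℝ) := by push_cast; ring
          _ ≤ ((t i : ℤ) : ℝ) := by exact_mod_cast this
      · have : t i ≤ (k:ℤ)+m := by omega
        calc ((t i : ℤ) : ℝ) ≤ (((k:ℤ)+m : ℤ) : ℝ) := by exact_mod_cast this
          _ = (k:ℝ)+m := by push_cast; ring
    have hmax : max |((t i : ℤ) : ℝ)| 1 ≤ (k:ℝ)+m := max_le habs hC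
    have hmaxpos : (0:ℝ) < max |((t i : ℤ) : ℝ)| 1 := lt_of_lt_of_le one_pos (le_max_right _ _)
    calc a (t i) ^ ℓ
        = (a (t i)^ℓ / (max |((t i : ℤ):ℝ)| 1)^2) * (max |((t i : ℤ):ℝ)| 1)^2 := by
          field_simp
      _ ≤ A * ((k:ℝ)+m)^2 :=
          mul_le_mul h1 (pow_le_pow_left₀ hmaxpos.le hmax 2) (by positivity) hApos.le
      _ = ((k:ℝ)+m)^2 * A := mul_comm _ _
  have hprodpow : (∏ i, a (t i)) ^ ℓ ≤ (((k:ℝ)+m)^2 * A) ^ ℓ := by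
    rw [← Finset.prod_pow]
    calc ∏ i, a (t i)^ℓ ≤ ∏ _i : Fin ℓ, ((k:ℝ)+m)^2 * A :=
        Finset.prod_le_prod (fun i _ => (pow_pos (hpos _) ℓ).le) (fun i _ => hbound i)
      _ = (((k:ℝ)+m)^2 * A)^ℓ := by simp
  have hprod : ∏ i, a (t i) ≤ ((k:ℝ)+m)^2 * A :=
    le_of_pow_le_pow_left₀ (by omega) (by positivity) hprodpow
  calc ∏ i, a (t i) ≤ ((k:ℝ)+m)^2 * A := hprod
    _ ≤ ((k:ℝ)+m)^(ℓ+1) * A := by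
        apply mul_le_mul_of_nonneg_right _ hApos.le
        exact pow_le_pow_right₀ hC (by omega)
end
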